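/- If Γ = {γ_{mn}} is a d-regular sequence, then the partial sums S(R) = Σ_{0 < |λ_{mn}| ≤ R} |d/λ_{mn} − 1/γ_{mn}| satisfy S(R) = o(R) as R → ∞, i.e. S(R)/R → 0 as R → ∞. -/

import Mathlib

/-!
Because `φ(t)/t` is non-increasing and `∫₁^∞ (φ(t)/t) dt/t < ∞`, `φ(t)/t → 0`. As soon as
`φ(|λ|) ≤ |λ|/2`, the estimate `|λ - dγ| ≤ φ(|λ|)` forces `|dγ| ≥ |λ|/2`, so
`|d/λ - 1/γ| = |d| |λ - dγ| / (|λ| |dγ|) ≤ 2|d| φ(|λ|)/|λ|²`. The sup-norm sphere of radius `k ≥ 1` has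
at most `4(2k+1) ≤ 12k` lattice points, so `S(R)` is at most a constant plus
`24|d| Σ_{1 ≤ k ≤ R} φ(k)/k`, which is `o(R)` by Cesàro.
-/

open Complex MeasureTheory Filter

/-- The integer lattice point `λ_{mn} = m + i n`. -/
noncomputable def latticePt (p : ℤ × ℤ) : ℂ := (p.1 : ℂ) + (p.2 : ℂ) * Complex.I

/-- A sequence `Γ = {γ_{mn}}` is `d`-regular if there are `c > 0` and
`φ : [1,∞) → ℝ` with `φ(t)/t` non-increasing, `∫₁^∞ φ(t)/t² dt < ∞`, such that
`|λ_{mn} - d γ_{mn}| ≤ φ(|λ_{mn}|)` and `|γ_{mn} - γ_{m'n'}| ≥ c |λ_{mn} - λ_{m'n'}|`. -/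
def DRegular (d : ℝ) (γ : ℤ × ℤ → ℂ) : Prop :=
  ∃ c : ℝ, 0 < c ∧ ∃ φ : ℝ → ℝ,
    (∀ s t : ℝ, 1 ≤ s → s ≤ t → φ t / t ≤ φ s / s) ∧
    MeasureTheory.IntegrableOn (fun t : ℝ => φ t / t ^ 2) (Set.Ici 1) ∧
    (∀ p : ℤ × ℤ, ‖latticePt p - (d : ℂ) * γ p‖ ≤ φ ‖latticePt p‖) ∧
    (∀ p q : ℤ × ℤ, c * ‖latticePt p - latticePt q‖ ≤ ‖γ p - γ q‖)

open Topology Finset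

theorem not_integrableOn_Ici_div_self_of_le_abs {f : ℝ → ℝ} {ε T : ℝ} (hε : 0 < ε) (hT : 0 < T)
    (hf : ∀ t, T ≤ t → ε ≤ |f t|) : ¬ IntegrableOn (fun t => f t / t) (Set.Ici T) := by
  intro hint
  refine not_integrableOn_Ici_inv ((hint.norm.const_mul ε⁻¹).mono'
    measurable_inv.aestronglyMeasurable ?_)
  filter_upwards [ae_restrict_mem measurableSet_Ici] with t (ht : T ≤ t)
  have ht₀ : 0 < t := hT.trans_le ht
  rw [Real.norm_eq_abs, Real.norm_eq_abs, abs_div, abs_of_pos ht₀, abs_inv, abs_of_pos ht₀,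
    ← mul_div_assoc, le_div_iff₀ ht₀, inv_mul_cancel₀ ht₀.ne', le_inv_mul_iff₀ hε, mul_one]
  exact hf t ht

theorem AntitoneOn.tendsto_zero_of_integrableOn_div_self {f : ℝ → ℝ} {a : ℝ} (ha : 0 < a)
    (hf : AntitoneOn f (Set.Ici a)) (hint : IntegrableOn (fun t => f t / t) (Set.Ici a)) :
    Tendsto f atTop (𝓝 0) := by
  refine tendsto_order.2 ⟨fun b hb => ?_, fun b hb => ?_⟩
  · by_contra h
    obtain ⟨t₀, hft₀, ht₀⟩ := ((not_eventually.1 h).and_eventually (eventually_ge_atTop a)).exists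
    refine not_integrableOn_Ici_div_self_of_le_abs (neg_pos.2 hb) (ha.trans_le ht₀)
      (fun t ht => ?_) (hint.mono_set (Set.Ici_subset_Ici.2 ht₀))
    have := hf ht₀ (ht₀.trans ht) ht
    rw [abs_of_neg (by linarith)]
    linarith
  · by_contra h
    refine not_integrableOn_Ici_div_self_of_le_abs hb ha (fun s hs => ?_) hint
    obtain ⟨t, hft, hst⟩ := ((not_eventually.1 h).and_eventually (eventually_ge_atTop s)).exists
    have := hf hs (hs.trans hst) hst
    exact (le_abs_self _).trans' (by linarith)

theorem tendsto_div_self_of_le_const_add_sum {S : ℝ → ℝ} {u : ℕ → ℝ} {C : ℝ}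
    (hu : Tendsto u atTop (𝓝 0)) (hS₀ : ∀ R, 0 ≤ S R)
    (hS : ∀ R, S R ≤ C + ∑ k ∈ range ⌊R⌋₊, u k) :
    Tendsto (fun R => S R / R) atTop (𝓝 0) := by
  have hmean : Tendsto (fun R : ℝ => (⌊R⌋₊ : ℝ)⁻¹ * ∑ k ∈ range ⌊R⌋₊, u k) atTop (𝓝 0) :=
    hu.cesaro.comp tendsto_nat_floor_atTop
  have hbound : Tendsto (fun R : ℝ => C * R⁻¹ +
      ((⌊R⌋₊ : ℝ)⁻¹ * ∑ k ∈ range ⌊R⌋₊, u k) * (⌊R⌋₊ / R)) atTop (𝓝 0) := by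
    simpa using (tendsto_inv_atTop_zero.const_mul C).add (hmean.mul tendsto_nat_floor_div_atTop)
  refine squeeze_zero' ((eventually_ge_atTop 0).mono fun R hR => div_nonneg (hS₀ R) hR) ?_ hbound
  filter_upwards [eventually_ge_atTop 1] with R hR
  have hR₀ : 0 < R := one_pos.trans_le hR
  have hN : (⌊R⌋₊ : ℝ) ≠ 0 := by exact_mod_cast (Nat.floor_pos.2 hR).ne'
  calc S R / R ≤ (C + ∑ k ∈ range ⌊R⌋₊, u k) / R := by gcongr; exact hS R
    _ = _ := by field_simp

theorem norm_div_sub_one_div_le {𝕜 : Type*} [NormedField 𝕜] {d z w : 𝕜} {e : ℝ} (hz : z ≠ 0)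
    (h : ‖z - d * w‖ ≤ e) (he : e ≤ ‖z‖ / 2) : ‖d / z - 1 / w‖ ≤ 2 * ‖d‖ * e / ‖z‖ ^ 2 := by
  have hz₀ : 0 < ‖z‖ := norm_pos_iff.2 hz
  have he₀ : 0 ≤ e := (norm_nonneg _).trans h
  have hdw : ‖z‖ / 2 ≤ ‖d * w‖ := by
    have := norm_sub_norm_le z (z - d * w)
    rw [sub_sub_cancel] at this
    linarith
  have hdw₀ : d * w ≠ 0 := norm_pos_iff.1 (by linarith)
  have hw : w ≠ 0 := right_ne_zero_of_mul hdw₀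
  have key : d / z - 1 / w = d * -(z - d * w) / (z * (d * w)) := by
    field_simp [left_ne_zero_of_mul hdw₀]
    ring
  rw [key, norm_div, norm_mul, norm_neg, norm_mul]
  calc ‖d‖ * ‖z - d * w‖ / (‖z‖ * ‖d * w‖) ≤ ‖d‖ * e / (‖z‖ * (‖z‖ / 2)) := by gcongr
    _ = 2 * ‖d‖ * e / ‖z‖ ^ 2 := by field_simp

def supNorm (p : ℤ × ℤ) : ℕ := max p.1.natAbs p.2.natAbs

noncomputable def supNormBall (n : ℕ) : Finset (ℤ × ℤ) := Icc (-n : ℤ) n ×ˢ Icc (-n : ℤ) n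

noncomputable def supNormSphere (n : ℕ) : Finset (ℤ × ℤ) := (supNormBall n).filter (supNorm · = n)

theorem mem_supNormBall {p : ℤ × ℤ} {n : ℕ} : p ∈ supNormBall n ↔ supNorm p ≤ n := by
  simp only [supNormBall, mem_product, mem_Icc, supNorm]
  omega

theorem card_supNormSphere_le (n : ℕ) : #(supNormSphere n) ≤ 4 * (2 * n + 1) := by
  have hsub : supNormSphere n ⊆
      {-(n : ℤ), (n : ℤ)} ×ˢ Icc (-(n : ℤ)) n ∪ Icc (-(n : ℤ)) n ×ˢ {-(n : ℤ), (n : ℤ)} := by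
    intro p hp
    rw [supNormSphere, mem_filter, mem_supNormBall, supNorm] at hp
    simp only [mem_union, mem_product, mem_insert, mem_singleton, mem_Icc]
    omega
  have hpair : #({-(n : ℤ), (n : ℤ)} : Finset ℤ) ≤ 2 := card_insert_le _ _
  have hIcc : #(Icc (-(n : ℤ)) n) = 2 * n + 1 := by
    rw [Int.card_Icc]
    omega
  calc #(supNormSphere n) ≤ _ := card_le_card hsub
    _ ≤ _ := card_union_le _ _
    _ ≤ 2 * (2 * n + 1) + (2 * n + 1) * 2 := by
      rw [card_product, card_product, hIcc]
      gcongr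
    _ = 4 * (2 * n + 1) := by ring

theorem sum_supNormBall_eq (f : ℕ → ℝ) (n : ℕ) :
    ∑ p ∈ supNormBall n, f (supNorm p) = ∑ k ∈ range (n + 1), #(supNormSphere k) * f k := by
  rw [← sum_fiberwise_of_maps_to (g := supNorm) (t := range (n + 1))
    fun p hp => mem_range_succ_iff.2 (mem_supNormBall.1 hp)]
  refine sum_congr rfl fun k hk => ?_
  have hfiber : (supNormBall n).filter (supNorm · = k) = supNormSphere k := by
    ext p
    simp only [supNormSphere, mem_filter, mem_supNormBall]
    have := mem_range_succ_iff.1 hk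
    omega
  rw [sum_congr rfl fun p hp => by rw [(mem_filter.1 hp).2], sum_const, hfiber, nsmul_eq_mul]

theorem sum_supNormBall_div_le {f : ℕ → ℝ} (hf : ∀ k, 1 ≤ k → 0 ≤ f k) (n : ℕ) :
    ∑ p ∈ supNormBall n, f (supNorm p) / supNorm p ≤ 12 * ∑ k ∈ range n, f (k + 1) := by
  rw [sum_supNormBall_eq (fun k => f k / k), sum_range_succ', mul_sum]
  -- the origin contributes `f 0 / 0 = 0`
  simp only [Nat.cast_zero, div_zero, mul_zero, add_zero]
  refine sum_le_sum fun k _ => ?_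
  have hk : (0 : ℝ) < k + 1 := by positivity
  have hcard : (#(supNormSphere (k + 1)) : ℝ) ≤ 12 * (k + 1) := by
    have : (#(supNormSphere (k + 1)) : ℝ) ≤ 4 * (2 * (k + 1) + 1) := by
      exact_mod_cast card_supNormSphere_le (k + 1)
    linarith
  have := hf (k + 1) le_add_self
  calc (#(supNormSphere (k + 1)) : ℝ) * (f (k + 1) / (k + 1 : ℕ))
      ≤ 12 * (k + 1) * (f (k + 1) / (k + 1)) := by push_cast; gcongr
    _ = 12 * f (k + 1) := by field_simp

theorem one_le_supNorm {p : ℤ × ℤ} (hp : p ≠ (0, 0)) : 1 ≤ supNorm p := by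
  by_contra h
  refine hp (Prod.ext ?_ ?_) <;> simp only [supNorm] at h <;> simp <;> omega

theorem supNorm_le_norm_latticePt (p : ℤ × ℤ) : (supNorm p : ℝ) ≤ ‖latticePt p‖ := by
  have h₁ := Complex.abs_re_le_norm (latticePt p)
  have h₂ := Complex.abs_im_le_norm (latticePt p)
  rw [show (latticePt p).re = p.1 by simp [latticePt]] at h₁
  rw [show (latticePt p).im = p.2 by simp [latticePt]] at h₂
  simp only [supNorm, Nat.cast_max, Nat.cast_natAbs, Int.cast_abs]
  exact max_le h₁ h₂

theorem norm_div_latticePt_sub_one_div_le {d : ℝ} {γ : ℤ × ℤ → ℂ} {φ : ℝ → ℝ}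
    (hφ : ∀ p : ℤ × ℤ, ‖latticePt p - (d : ℂ) * γ p‖ ≤ φ ‖latticePt p‖)
    (hanti : AntitoneOn (fun t => φ t / t) (Set.Ici 1)) (hφ₀ : ∀ t, 1 ≤ t → 0 ≤ φ t / t)
    {p : ℤ × ℤ} (hp : p ≠ (0, 0)) (hhalf : φ ‖latticePt p‖ / ‖latticePt p‖ ≤ 1 / 2) :
    ‖(d : ℂ) / latticePt p - 1 / γ p‖ ≤ 2 * |d| * (φ (supNorm p) / supNorm p) / supNorm p := by
  have hk : (1 : ℝ) ≤ supNorm p := by exact_mod_cast one_le_supNorm hp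
  set L := ‖latticePt p‖
  set k : ℝ := (supNorm p : ℝ)
  have hkL : k ≤ L := supNorm_le_norm_latticePt p
  have hL : 0 < L := by linarith
  have hhalf' : φ L ≤ L / 2 := by rwa [div_le_iff₀ hL, one_div_mul_eq_div] at hhalf
  calc ‖(d : ℂ) / latticePt p - 1 / γ p‖ ≤ 2 * ‖(d : ℂ)‖ * φ L / L ^ 2 :=
        norm_div_sub_one_div_le (norm_pos_iff.1 hL) (hφ p) hhalf'
    _ = 2 * |d| * (φ L / L) / L := by rw [Complex.norm_real, Real.norm_eq_abs]; ring
    _ ≤ 2 * |d| * (φ k / k) / L := by gcongr 2 * |d| * ?_ / L; exact hanti hk (hk.trans hkL) hkL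
    _ ≤ 2 * |d| * (φ k / k) / k := by have := hφ₀ k hk; gcongr

noncomputable def partialSum (d : ℝ) (γ : ℤ × ℤ → ℂ) (R : ℝ) : ℝ :=
  ∑' p : ℤ × ℤ,
    if p ≠ (0, 0) ∧ ‖latticePt p‖ ≤ R then ‖(d : ℂ) / latticePt p - 1 / γ p‖ else 0

theorem partialSum_nonneg (d : ℝ) (γ : ℤ × ℤ → ℂ) (R : ℝ) : 0 ≤ partialSum d γ R :=
  tsum_nonneg fun _ => by split_ifs <;> positivity

theorem partialSum_summand_le {d : ℝ} {γ : ℤ × ℤ → ℂ} {φ : ℝ → ℝ}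
    (hφ : ∀ p : ℤ × ℤ, ‖latticePt p - (d : ℂ) * γ p‖ ≤ φ ‖latticePt p‖)
    (hanti : AntitoneOn (fun t => φ t / t) (Set.Ici 1)) (hφ₀ : ∀ t, 1 ≤ t → 0 ≤ φ t / t)
    {T : ℝ} (hT : ∀ t, T ≤ t → φ t / t ≤ 1 / 2) (R : ℝ) (p : ℤ × ℤ) :
    (if p ≠ (0, 0) ∧ ‖latticePt p‖ ≤ R then ‖(d : ℂ) / latticePt p - 1 / γ p‖ else 0) ≤
      (if p ∈ supNormBall ⌈T⌉₊ then ‖(d : ℂ) / latticePt p - 1 / γ p‖ else 0) +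
        2 * |d| * (φ (supNorm p) / supNorm p) / supNorm p := by
  have hB : 0 ≤ 2 * |d| * (φ (supNorm p) / supNorm p) / supNorm p := by
    rcases Nat.eq_zero_or_pos (supNorm p) with h | h
    · simp [h]
    · have := hφ₀ (supNorm p) (by exact_mod_cast h)
      positivity
  have := norm_nonneg ((d : ℂ) / latticePt p - 1 / γ p)
  split_ifs with hpR hpT hpT
  · linarith
  · rw [mem_supNormBall, not_le] at hpT
    have hTp : T ≤ ‖latticePt p‖ := (Nat.le_ceil T).trans
      ((Nat.cast_le.2 hpT.le).trans (supNorm_le_norm_latticePt p))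
    rw [zero_add]
    exact norm_div_latticePt_sub_one_div_le hφ hanti hφ₀ hpR.1 (hT _ hTp)
  · linarith
  · linarith

theorem partialSum_le {d : ℝ} {γ : ℤ × ℤ → ℂ} {φ : ℝ → ℝ}
    (hφ : ∀ p : ℤ × ℤ, ‖latticePt p - (d : ℂ) * γ p‖ ≤ φ ‖latticePt p‖)
    (hanti : AntitoneOn (fun t => φ t / t) (Set.Ici 1)) (hφ₀ : ∀ t, 1 ≤ t → 0 ≤ φ t / t)
    {T : ℝ} (hT : ∀ t, T ≤ t → φ t / t ≤ 1 / 2) (R : ℝ) :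
    partialSum d γ R ≤ ∑ p ∈ supNormBall ⌈T⌉₊, ‖(d : ℂ) / latticePt p - 1 / γ p‖ +
      12 * ∑ k ∈ range ⌊R⌋₊, 2 * |d| * (φ (k + 1 : ℕ) / (k + 1 : ℕ)) := by
  have hsupport : ∀ p ∉ supNormBall ⌊R⌋₊, (if p ≠ (0, 0) ∧ ‖latticePt p‖ ≤ R then
      ‖(d : ℂ) / latticePt p - 1 / γ p‖ else 0) = 0 := by
    refine fun p hp => if_neg fun hpR => hp (mem_supNormBall.2 (Nat.le_floor ?_))
    exact (supNorm_le_norm_latticePt p).trans hpR.2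
  rw [partialSum, tsum_eq_sum hsupport]
  refine (sum_le_sum fun p _ => partialSum_summand_le hφ hanti hφ₀ hT R p).trans ?_
  rw [sum_add_distrib, sum_ite_mem]
  exact add_le_add
    (sum_le_sum_of_subset_of_nonneg inter_subset_right fun _ _ _ => norm_nonneg _)
    (sum_supNormBall_div_le (fun k hk => mul_nonneg (by positivity)
      (hφ₀ k (by exact_mod_cast hk))) _)

theorem dRegular_partial_sums_littleO_general (d : ℝ) (γ : ℤ × ℤ → ℂ)
    (hΓ : DRegular d γ) :
    Filter.Tendsto
      (fun R : ℝ =>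
        (∑' p : ℤ × ℤ,
          if p ≠ (0, 0) ∧ ‖latticePt p‖ ≤ R then
            ‖(d : ℂ) / latticePt p - 1 / γ p‖
          else 0) / R)
      Filter.atTop (nhds 0) := by
  obtain ⟨-, -, φ, hmono, hint, hφ, -⟩ := hΓ
  have hanti : AntitoneOn (fun t => φ t / t) (Set.Ici 1) := fun s hs t _ hst => hmono s t hs hst
  have hlim : Tendsto (fun t => φ t / t) atTop (𝓝 0) :=
    hanti.tendsto_zero_of_integrableOn_div_self one_pos (by simpa only [div_div, ← sq] using hint)
  have hφ₀ : ∀ t, 1 ≤ t → 0 ≤ φ t / t := fun t ht =>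
    le_of_tendsto hlim ((eventually_ge_atTop t).mono fun s hs => hanti ht (ht.trans hs) hs)
  obtain ⟨T, hT⟩ := eventually_atTop.1 (hlim.eventually (ge_mem_nhds one_half_pos))
  have hu : Tendsto (fun k : ℕ => 12 * (2 * |d| * (φ (k + 1 : ℕ) / (k + 1 : ℕ)))) atTop (𝓝 0) := by
    simpa using (((hlim.comp tendsto_natCast_atTop_atTop).comp (tendsto_add_atTop_nat 1)).const_mul
      (2 * |d|)).const_mul 12
  exact tendsto_div_self_of_le_const_add_sum hu (partialSum_nonneg d γ)
    fun R => (partialSum_le hφ hanti hφ₀ hT R).trans_eq (by rw [mul_sum])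

/-- Lemma 2.1(c): the partial sums S(R) = Σ_{0<|λ_{mn}|≤R} |d/λ_{mn} − 1/γ_{mn}|
satisfy S(R) = o(R) as R → ∞. -/
theorem dRegular_partial_sums_littleO (d : ℝ) (hd : 0 < d) (γ : ℤ × ℤ → ℂ)
    (hΓ : DRegular d γ) :
    Filter.Tendsto
      (fun R : ℝ =>
        (∑' p : ℤ × ℤ,
          if p ≠ (0, 0) ∧ ‖latticePt p‖ ≤ R then
            ‖(d : ℂ) / latticePt p - 1 / γ p‖
          else 0) / R)
      Filter.atTop (nhds 0) :=
  dRegular_partial_sums_littleO_general d γ hΓ
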